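/- For all convex bodies K, C in R^n, the chain (1+s(K))·r(K,−C) ≤ r(K,−C) + R(K,C) ≤ ((1+s(K))/s(K))·R(K,C) ≤ (1/2)(1+s(C))·D(K,C) holds. -/

import Mathlib

open Pointwise

/-- A convex body: compact, convex, with nonempty interior. -/
def IsBody {n : ℕ} (K : Set (Fin n → ℝ)) : Prop :=
  Convex ℝ K ∧ IsCompact K ∧ (interior K).Nonempty

/-- Circumradius of `K` w.r.t. `C`: smallest `ρ > 0` with `K` contained in a translate of `ρ • C`. -/
noncomputable def circR {n : ℕ} (K C : Set (Fin n → ℝ)) : ℝ :=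
  sInf {ρ : ℝ | 0 < ρ ∧ ∃ t : Fin n → ℝ, K ⊆ t +ᵥ ρ • C}

/-- Inradius of `K` w.r.t. `C`: largest `ρ ≥ 0` with a translate of `ρ • C` inside `K`. -/
noncomputable def inrad {n : ℕ} (K C : Set (Fin n → ℝ)) : ℝ :=
  sSup {ρ : ℝ | 0 ≤ ρ ∧ ∃ t : Fin n → ℝ, t +ᵥ ρ • C ⊆ K}

/-- Minkowski asymmetry `s(K) = R(-K, K)`. -/
noncomputable def asym {n : ℕ} (K : Set (Fin n → ℝ)) : ℝ := circR (-K) K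

/-- Diameter of `K` w.r.t. `C`: twice the maximal circumradius of a segment with endpoints in `K`. -/
noncomputable def diamC {n : ℕ} (K C : Set (Fin n → ℝ)) : ℝ :=
  sSup {d : ℝ | ∃ x ∈ K, ∃ y ∈ K, d = 2 * circR (segment ℝ x y) C}

/-- `K` is (diametrically) complete w.r.t. `C`. -/
def IsDiamComplete {n : ℕ} (K C : Set (Fin n → ℝ)) : Prop :=
  ∀ K' : Set (Fin n → ℝ), IsBody K' → K ⊂ K' → diamC K C < diamC K' C

/-- `S` is an `n`-simplex: convex hull of `n+1` affinely independent points. -/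
def IsSimplexBody {n : ℕ} (S : Set (Fin n → ℝ)) : Prop :=
  ∃ p : Fin (n + 1) → (Fin n → ℝ), AffineIndependent ℝ p ∧ S = convexHull ℝ (Set.range p)

/-- Support function of `C`. -/
noncomputable def supp {n : ℕ} (C : Set (Fin n → ℝ)) (a : Fin n → ℝ) : ℝ :=
  sSup {r : ℝ | ∃ x ∈ C, r = dotProduct a x}

/-- `A ⊆ₜ B`: `A` is contained in some translate of `B`. -/
def SubsetT {n : ℕ} (A B : Set (Fin n → ℝ)) : Prop := ∃ t : Fin n → ℝ, A ⊆ t +ᵥ B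

/-!
If `-K ⊆ t + σK`, then every `x ∈ K` is a translate of `σ/(1+σ) • (x - k)` for some `k ∈ K`.
Differences of points of `K` lie in `δ • (C - C)` for every `δ > D(K,C)/2`, and
`C - C` lies in a translate of `(1 + s(C)) • C`. Chaining these containments puts `K` into a
translate of `s(K)/(1+s(K)) · D/2 · (1+s(C)) • C`, which is the Bohnenblust bound. For the
inradius, `-K ⊆ R • (-C)` and `r • (-C) ⊆ K` (up to translations) give `-K ⊆ (R/r) • K`, i.e.
`s(K) r ≤ R`. The rest is arithmetic, using `s(K) ≥ 1` in positive dimension.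
-/

variable {n : ℕ}

lemma subsetT_iff_exists_vadd_subset {A B : Set (Fin n → ℝ)} :
    SubsetT A B ↔ ∃ t : Fin n → ℝ, t +ᵥ A ⊆ B :=
  ⟨fun ⟨t, ht⟩ => ⟨-t, Set.subset_vadd_set_iff.1 ht⟩,
    fun ⟨t, ht⟩ => ⟨-t, Set.subset_vadd_set_iff.2 (by rwa [neg_neg])⟩⟩

namespace SubsetT

variable {A B E : Set (Fin n → ℝ)}

lemma of_subset (h : A ⊆ B) : SubsetT A B := ⟨0, by rwa [zero_vadd]⟩

lemma trans (hAB : SubsetT A B) (hBE : SubsetT B E) : SubsetT A E := by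
  obtain ⟨t, ht⟩ := hAB
  obtain ⟨u, hu⟩ := hBE
  exact ⟨t + u, ht.trans <| (Set.vadd_set_mono hu).trans_eq (vadd_vadd t u E)⟩

lemma smul (h : SubsetT A B) (c : ℝ) : SubsetT (c • A) (c • B) := by
  obtain ⟨t, ht⟩ := h
  refine ⟨c • t, ?_⟩
  rintro _ ⟨x, hx, rfl⟩
  obtain ⟨b, hb, rfl⟩ := ht hx
  exact ⟨c • b, Set.smul_mem_smul_set hb, by simp only [vadd_eq_add, smul_add]⟩

lemma neg (h : SubsetT A B) : SubsetT (-A) (-B) := by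
  simpa only [Set.neg_smul_set, one_smul] using h.smul (-1)

end SubsetT

lemma subsetT_smul_of_le {C : Set (Fin n → ℝ)} (hC : Convex ℝ C) (hCne : C.Nonempty)
    {a b : ℝ} (ha : 0 ≤ a) (hab : a ≤ b) : SubsetT (a • C) (b • C) := by
  obtain ⟨c, hc⟩ := hCne
  refine ⟨-((b - a) • c), fun x hx => ?_⟩
  have hsplit : b • C = a • C + (b - a) • C := by
    rw [← hC.add_smul ha (sub_nonneg.2 hab), add_sub_cancel]
  refine ⟨x + (b - a) • c, ?_, by simp⟩
  rw [hsplit]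
  exact Set.add_mem_add hx (Set.smul_mem_smul_set hc)

lemma exists_subsetT_smul {A B : Set (Fin n → ℝ)} (hA : Bornology.IsBounded A)
    (hB : (interior B).Nonempty) : ∃ ρ : ℝ, 0 < ρ ∧ SubsetT A (ρ • B) := by
  obtain ⟨c, hc⟩ := hB
  obtain ⟨ε, hε, hball⟩ := Metric.isOpen_iff.1 isOpen_interior c hc
  obtain ⟨r, hr, hAr⟩ := hA.subset_ball_lt 0 0
  have hball0 : SubsetT (Metric.ball 0 ε) B :=
    subsetT_iff_exists_vadd_subset.2 ⟨c, by
      rw [vadd_ball_zero]; exact hball.trans interior_subset⟩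
  refine ⟨r / ε, by positivity, (SubsetT.of_subset hAr).trans ?_⟩
  have := hball0.smul (r / ε)
  rwa [smul_ball (by positivity), smul_zero, Real.norm_eq_abs, abs_of_pos (by positivity),
    div_mul_cancel₀ _ hε.ne'] at this

section Radii

variable {K C : Set (Fin n → ℝ)}

lemma circR_nonneg (K C : Set (Fin n → ℝ)) : 0 ≤ circR K C :=
  Real.sInf_nonneg fun _ hρ => hρ.1.le

lemma asym_nonneg (K : Set (Fin n → ℝ)) : 0 ≤ asym K := circR_nonneg _ _

lemma circR_le {ρ : ℝ} (hρ : 0 < ρ) (h : SubsetT K (ρ • C)) : circR K C ≤ ρ :=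
  csInf_le ⟨0, fun _ hσ => hσ.1.le⟩ ⟨hρ, h⟩

lemma le_circR (hK : Bornology.IsBounded K) (hC : (interior C).Nonempty) {a : ℝ}
    (h : ∀ ρ, 0 < ρ → SubsetT K (ρ • C) → a ≤ ρ) : a ≤ circR K C :=
  le_csInf (exists_subsetT_smul hK hC) fun ρ hρ => h ρ hρ.1 hρ.2

lemma subsetT_smul_of_circR_lt (hK : Bornology.IsBounded K) (hC : IsBody C) {ρ : ℝ}
    (h : circR K C < ρ) : SubsetT K (ρ • C) := by
  obtain ⟨σ, ⟨hσ, hKσ⟩, hσρ⟩ := exists_lt_of_csInf_lt (exists_subsetT_smul hK hC.2.2) h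
  exact hKσ.trans (subsetT_smul_of_le hC.1 (hC.2.2.mono interior_subset) hσ.le hσρ.le)

lemma diam_le_of_subsetT {A B : Set (Fin n → ℝ)} (hB : Bornology.IsBounded B)
    (h : SubsetT A B) : Metric.diam A ≤ Metric.diam B := by
  obtain ⟨t, ht⟩ := h
  exact (Metric.diam_mono ht (hB.vadd t)).trans_eq (diam_vadd t B)

lemma one_le_asym (hn : 0 < n) (hK : IsBody K) : 1 ≤ asym K := by
  have : Nonempty (Fin n) := ⟨⟨0, hn⟩⟩
  obtain ⟨k, hk⟩ := hK.2.2
  have hdiam : 0 < Metric.diam K := Metric.diam_pos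
    (infinite_of_mem_nhds k (mem_interior_iff_mem_nhds.1 hk)).nontrivial hK.2.1.isBounded
  refine le_circR hK.2.1.neg.isBounded hK.2.2 fun σ hσ hKσ => ?_
  have := diam_le_of_subsetT (hK.2.1.isBounded.smul₀ σ) hKσ
  rw [← Set.image_neg_eq_neg, isometry_neg.diam_image, diam_smul₀, Real.norm_eq_abs,
    abs_of_pos hσ] at this
  nlinarith

lemma asym_mul_le_circR (hK : Bornology.IsBounded K) (hC : (interior C).Nonempty) {ρ : ℝ}
    (hρ : 0 ≤ ρ) (h : SubsetT (ρ • -C) K) : asym K * ρ ≤ circR K C := by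
  rcases hρ.eq_or_lt with rfl | hρ
  · simpa using circR_nonneg K C
  refine le_circR hK hC fun ρ' hρ' hKρ' => ?_
  have hneg : SubsetT (-K) ((ρ' / ρ) • (ρ • -C)) := by
    rw [smul_smul, div_mul_cancel₀ _ hρ.ne', Set.smul_set_neg]
    exact hKρ'.neg
  exact (le_div_iff₀ hρ).1 (circR_le (by positivity) (hneg.trans (h.smul _)))

lemma asym_mul_inrad_le_circR (hK : Bornology.IsBounded K) (hC : (interior C).Nonempty) :
    asym K * inrad K (-C) ≤ circR K C := by
  rcases (asym_nonneg K).eq_or_lt with hs | hs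
  · simpa [← hs] using circR_nonneg K C
  refine (le_div_iff₀' hs).1 (Real.sSup_le (fun ρ ⟨hρ, hKρ⟩ => ?_)
    (div_nonneg (circR_nonneg K C) hs.le))
  exact (le_div_iff₀' hs).2
    (asym_mul_le_circR hK hC hρ (subsetT_iff_exists_vadd_subset.2 hKρ))

end Radii

section Bohnenblust

variable {K C : Set (Fin n → ℝ)}

lemma two_mul_circR_segment_le_diamC (hK : IsBody K) (hC : (interior C).Nonempty)
    {x y : Fin n → ℝ} (hx : x ∈ K) (hy : y ∈ K) :
    2 * circR (segment ℝ x y) C ≤ diamC K C := by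
  obtain ⟨ρ, hρ, hKρ⟩ := exists_subsetT_smul hK.2.1.isBounded hC
  refine le_csSup ⟨2 * ρ, ?_⟩ ⟨x, hx, y, hy, rfl⟩
  rintro _ ⟨x, hx, y, hy, rfl⟩
  have := circR_le hρ ((SubsetT.of_subset (hK.1.segment_subset hx hy)).trans hKρ)
  linarith

lemma diamC_nonneg (hK : IsBody K) (hC : (interior C).Nonempty) : 0 ≤ diamC K C := by
  obtain ⟨k, hk⟩ := hK.2.2
  have hkK := interior_subset hk
  exact (mul_nonneg zero_le_two (circR_nonneg _ _)).trans
    (two_mul_circR_segment_le_diamC hK hC hkK hkK)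

lemma sub_self_subset_smul_sub_self_of_diamC_lt (hK : IsBody K) (hC : IsBody C) {δ : ℝ}
    (hδ : diamC K C < 2 * δ) : K - K ⊆ δ • (C - C) := by
  rintro _ ⟨x, hx, y, hy, rfl⟩
  have hlt : circR (segment ℝ x y) C < δ := by
    linarith [two_mul_circR_segment_le_diamC hK hC.2.2 hx hy]
  obtain ⟨t, ht⟩ := subsetT_smul_of_circR_lt
    (hK.2.1.isBounded.subset (hK.1.segment_subset hx hy)) hC hlt
  obtain ⟨_, ⟨a, ha, rfl⟩, hxa⟩ := ht (left_mem_segment ℝ x y)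
  obtain ⟨_, ⟨b, hb, rfl⟩, hyb⟩ := ht (right_mem_segment ℝ x y)
  refine ⟨a - b, Set.sub_mem_sub ha hb, ?_⟩
  rw [← hxa, ← hyb]
  simp only [vadd_eq_add, smul_sub]
  abel

lemma subsetT_smul_sub_self {σ : ℝ} (hσ : 0 ≤ σ) (h : SubsetT (-K) (σ • K)) :
    SubsetT K ((σ / (1 + σ)) • (K - K)) := by
  obtain ⟨t, ht⟩ := h
  refine ⟨-(1 + σ)⁻¹ • t, fun x hx => ?_⟩
  obtain ⟨_, ⟨k, hk, rfl⟩, hxk⟩ := ht (Set.neg_mem_neg.2 hx)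
  refine ⟨(σ / (1 + σ)) • (x - k), Set.smul_mem_smul_set (Set.sub_mem_sub hx hk), ?_⟩
  simp only [vadd_eq_add] at hxk ⊢
  have : 1 + σ ≠ 0 := by positivity
  linear_combination (norm := match_scalars <;> field_simp <;> ring) (-(1 + σ)⁻¹) • hxk

lemma sub_self_subsetT_smul (hC : Convex ℝ C) {τ : ℝ} (hτ : 0 ≤ τ) (h : SubsetT (-C) (τ • C)) :
    SubsetT (C - C) ((1 + τ) • C) := by
  obtain ⟨t, ht⟩ := h
  refine ⟨t, ?_⟩
  rintro _ ⟨a, ha, b, hb, rfl⟩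
  obtain ⟨_, ⟨c, hc, rfl⟩, hbc⟩ := ht (Set.neg_mem_neg.2 hb)
  rw [hC.add_smul zero_le_one hτ, one_smul]
  refine ⟨a + τ • c, Set.add_mem_add ha (Set.smul_mem_smul_set hc), ?_⟩
  simp only [vadd_eq_add] at hbc ⊢
  rw [sub_eq_add_neg, ← hbc]
  abel

lemma circR_le_of_neg_subsetT (hK : IsBody K) (hC : IsBody C) {σ τ δ : ℝ} (hσ : 0 < σ)
    (hτ : 0 ≤ τ) (hKσ : SubsetT (-K) (σ • K)) (hCτ : SubsetT (-C) (τ • C))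
    (hδ : diamC K C < 2 * δ) : circR K C ≤ σ / (1 + σ) * δ * (1 + τ) := by
  have hδ0 : 0 < δ := by linarith [diamC_nonneg hK hC.2.2]
  have hKK : SubsetT (K - K) (δ • (1 + τ) • C) :=
    (SubsetT.of_subset (sub_self_subset_smul_sub_self_of_diamC_lt hK hC hδ)).trans
      ((sub_self_subsetT_smul hC.1 hτ hCτ).smul δ)
  refine circR_le (by positivity) ?_
  simpa only [smul_smul, mul_assoc] using (subsetT_smul_sub_self hσ.le hKσ).trans (hKK.smul _)

lemma circR_le_bohnenblust (hK : IsBody K) (hC : IsBody C) :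
    circR K C ≤ asym K / (1 + asym K) * (diamC K C / 2) * (1 + asym C) := by
  have hs := asym_nonneg K
  -- The infima defining `asym K`, `asym C` and `diamC K C` are approached from above.
  set F : ℝ → ℝ := fun e =>
    (asym K + e) / (1 + (asym K + e)) * (diamC K C / 2 + e) * (1 + (asym C + e))
  have hF : ContinuousAt F 0 := by
    have : 1 + (asym K + 0) ≠ 0 := by positivity
    fun_prop (disch := assumption)
  have hle : ∀ e > 0, circR K C ≤ F e := fun e he =>
    circR_le_of_neg_subsetT hK hC (by positivity) (by linarith [asym_nonneg C])
      (subsetT_smul_of_circR_lt hK.2.1.neg.isBounded hK (lt_add_of_pos_right _ he))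
      (subsetT_smul_of_circR_lt hC.2.1.neg.isBounded hC (lt_add_of_pos_right _ he))
      (by linarith)
  simpa [F] using ge_of_tendsto (hF.tendsto.mono_left nhdsWithin_le_nhds)
    (eventually_nhdsWithin_of_forall (s := Set.Ioi 0) hle)

end Bohnenblust

lemma circR_eq_zero_of_dim_zero (K C : Set (Fin 0 → ℝ)) (hC : C.Nonempty) : circR K C = 0 := by
  obtain ⟨c, hc⟩ := hC
  refine le_antisymm (le_of_forall_pos_le_add fun ε hε => ?_) (circR_nonneg K C)
  have hKε : SubsetT K (ε • C) :=
    ⟨0, fun _ _ => ⟨ε • c, Set.smul_mem_smul_set hc, Subsingleton.elim _ _⟩⟩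
  linarith [circR_le hε hKε]

-- The defining set is unbounded, so this is the junk value of `sSup`.
lemma inrad_eq_zero_of_dim_zero (K C : Set (Fin 0 → ℝ)) (hK : K.Nonempty) : inrad K C = 0 := by
  obtain ⟨k, hk⟩ := hK
  refine Real.sSup_of_not_bddAbove
    (not_bddAbove_iff.2 fun ρ => ⟨|ρ| + 1, ⟨by positivity, k, ?_⟩, ?_⟩)
  · exact fun x _ => Subsingleton.elim k x ▸ hk
  · linarith [le_abs_self ρ]

theorem stmt9 {n : ℕ} (K C : Set (Fin n → ℝ)) (hK : IsBody K) (hC : IsBody C) :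
    (1 + asym K) * inrad K (-C) ≤ inrad K (-C) + circR K C ∧
    inrad K (-C) + circR K C ≤ ((1 + asym K) / asym K) * circR K C ∧
    ((1 + asym K) / asym K) * circR K C ≤ (1 / 2) * (1 + asym C) * diamC K C := by
  obtain rfl | hn := n.eq_zero_or_pos
  · -- In dimension 0 all radii vanish, and `(1 + 0) / 0 = 0`.
    have hK₀ : K.Nonempty := hK.2.2.mono interior_subset
    have hs : asym K = 0 := circR_eq_zero_of_dim_zero _ _ hK₀
    rw [inrad_eq_zero_of_dim_zero _ _ hK₀, hs,
      circR_eq_zero_of_dim_zero _ _ (hC.2.2.mono interior_subset)]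
    have hsC := asym_nonneg C
    have hD := diamC_nonneg hK hC.2.2
    norm_num
    positivity
  · have hsr := asym_mul_inrad_le_circR hK.2.1.isBounded hC.2.2
    have hR := circR_le_bohnenblust hK hC
    have hs := one_le_asym hn hK
    have hs₀ : 0 < asym K := by linarith
    refine ⟨by linarith, ?_, ?_⟩
    · rw [div_mul_eq_mul_div, le_div_iff₀ hs₀]
      linarith
    · calc (1 + asym K) / asym K * circR K C
          ≤ (1 + asym K) / asym K * (asym K / (1 + asym K) * (diamC K C / 2) * (1 + asym C)) :=
            mul_le_mul_of_nonneg_left hR (by positivity)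
        _ = 1 / 2 * (1 + asym C) * diamC K C := by
            field_simp
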